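/- Let H₀ be a nonzero real number and let u : ℝ × ℝ → ℝ be continuous, 2π-periodic in the second variable, with continuous time derivative ∂ₜu, satisfying for all t, x: ∂ₜu(t,x) = 𝒟(sin∘u(t,·))(x) − C̃(u(t,·))/H₀, together with ∫₀^{2π} sin(u(0,x)) dx = 0 and ∫₀^{2π} cos(u(0,x)) dx = H₀. Then for every t and x, the function y ↦ ∂ₜu(t,y) is differentiable at x with derivative sin(u(t,x)); that is, u is a classical solution of the sine-Gordon equation u_{tx} = sin u. -/

import Mathlib

open Real intervalIntegral

/-- The mean value `f̄ = (1/(2π)) ∫₀^{2π} f(y) dy` of a `2π`-periodic function. -/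
noncomputable def fmean (f : ℝ → ℝ) : ℝ := (1 / (2 * π)) * ∫ y in (0:ℝ)..(2 * π), f y

/-- The antiderivative operator `𝒟`, the realization on continuous functions of the
maximal Tseng generalized inverse `∂ₓ†` of the spatial derivative on `𝕊 = ℝ/2πℤ`. -/
noncomputable def Dop (f : ℝ → ℝ) (x : ℝ) : ℝ :=
  (∫ y in (0:ℝ)..x, (f y - fmean f)) -
    (1 / (2 * π)) * ∫ z in (0:ℝ)..(2 * π), (∫ y in (0:ℝ)..z, (f y - fmean f))

/-- `C̃(v) = ∫₀^{2π} cos(v(x)) ⬝ 𝒟(sin∘v)(x) dx`. -/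
noncomputable def Ctilde (v : ℝ → ℝ) : ℝ :=
  ∫ x in (0:ℝ)..(2 * π), Real.cos (v x) * Dop (fun y => Real.sin (v y)) x

/-!
Put `ℱ(t) = ∫₀^{2π} sin u(t,x) dx`, `ℋ(t) = ∫₀^{2π} cos u(t,x) dx` and `c(t) = C̃(u(t,·))/H₀`.
Differentiating under the integral sign and using `∫₀^{2π} g ⬝ 𝒟g = 0` gives
`ℱ' = -c (ℋ - H₀)` and `ℋ' = c ℱ`, so `ℱ² + (ℋ - H₀)²` is conserved; it vanishes at `t = 0`,
hence `ℱ ≡ 0`. Then `sin ∘ u(t,·)` has mean zero, so `𝒟` is an exact antiderivative of it and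
`∂ₓ ∂ₜu = ∂ₓ 𝒟(sin ∘ u) = sin u`.
-/

lemma integral_sub_average_eq_zero {g : ℝ → ℝ}
    (hg : IntervalIntegrable g MeasureTheory.volume 0 (2 * π)) :
    ∫ x in (0:ℝ)..(2 * π), (g x - (1 / (2 * π)) * ∫ y in (0:ℝ)..(2 * π), g y) = 0 := by
  rw [intervalIntegral.integral_sub hg intervalIntegrable_const, integral_const, smul_eq_mul]
  field_simp
  ring

lemma integral_sub_fmean_eq_zero {f : ℝ → ℝ} (hf : Continuous f) :
    ∫ y in (0:ℝ)..(2 * π), (f y - fmean f) = 0 :=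
  integral_sub_average_eq_zero (hf.intervalIntegrable _ _)

lemma hasDerivAt_Dop {f : ℝ → ℝ} (hf : Continuous f) (x : ℝ) :
    HasDerivAt (Dop f) (f x - fmean f) x :=
  ((hf.sub continuous_const).integral_hasStrictDerivAt 0 x).hasDerivAt.sub_const _

lemma continuous_Dop {f : ℝ → ℝ} (hf : Continuous f) : Continuous (Dop f) :=
  continuous_iff_continuousAt.2 fun x => (hasDerivAt_Dop hf x).continuousAt

lemma Dop_two_pi {f : ℝ → ℝ} (hf : Continuous f) : Dop f (2 * π) = Dop f 0 := by
  simp [Dop, integral_sub_fmean_eq_zero hf]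

lemma integral_Dop_eq_zero {f : ℝ → ℝ} (hf : Continuous f) :
    ∫ x in (0:ℝ)..(2 * π), Dop f x = 0 :=
  integral_sub_average_eq_zero <| Continuous.intervalIntegrable
    (continuous_primitive (fun _ _ => (hf.sub continuous_const).intervalIntegrable _ _) 0) _ _

lemma integral_mul_Dop_eq_zero {f : ℝ → ℝ} (hf : Continuous f) :
    ∫ x in (0:ℝ)..(2 * π), f x * Dop f x = 0 := by
  have hD := continuous_Dop hf
  have hf₀ : Continuous fun x => (f x - fmean f) * Dop f x := by fun_prop
  -- `(f - f̄) ⬝ 𝒟f` is the derivative of `(𝒟f)² / 2`, and `𝒟f` is periodic.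
  have h_centred : ∫ x in (0:ℝ)..(2 * π), (f x - fmean f) * Dop f x = 0 := by
    rw [integral_eq_sub_of_hasDerivAt (f := fun x => Dop f x ^ 2 / 2)
      (fun x _ => (((hasDerivAt_Dop hf x).pow 2).div_const 2).congr_deriv (by ring))
      (hf₀.intervalIntegrable _ _), Dop_two_pi hf, sub_self]
  calc ∫ x in (0:ℝ)..(2 * π), f x * Dop f x
      = (∫ x in (0:ℝ)..(2 * π), (f x - fmean f) * Dop f x)
          + ∫ x in (0:ℝ)..(2 * π), fmean f * Dop f x := by
        rw [← integral_add (hf₀.intervalIntegrable _ _)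
          (Continuous.intervalIntegrable (by fun_prop) _ _)]
        simp only [sub_mul, sub_add_cancel]
    _ = 0 := by rw [h_centred, integral_const_mul, integral_Dop_eq_zero hf, mul_zero, add_zero]

lemma hasDerivAt_intervalIntegral_of_continuous {E : Type*} [NormedAddCommGroup E]
    [NormedSpace ℝ E] [CompleteSpace E] {F F' : ℝ → ℝ → E} {a b : ℝ}
    (hF : ∀ s, Continuous (F s)) (hF' : Continuous (Function.uncurry F'))
    (hd : ∀ s x, HasDerivAt (fun s => F s x) (F' s x) s) (t : ℝ) :
    HasDerivAt (fun s => ∫ x in a..b, F s x) (∫ x in a..b, F' t x) t := by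
  obtain ⟨C, hC⟩ := ((isCompact_closedBall t 1).prod (isCompact_uIcc (a := a) (b := b))
    ).exists_bound_of_continuousOn hF'.continuousOn
  refine (hasDerivAt_integral_of_dominated_loc_of_deriv_le (bound := fun _ => C)
    (Metric.ball_mem_nhds t one_pos)
    (Filter.Eventually.of_forall fun s => (hF s).aestronglyMeasurable.restrict)
    ((hF t).intervalIntegrable _ _) (hF'.uncurry_left t).aestronglyMeasurable.restrict
    (MeasureTheory.ae_of_all _ fun x hx s hs =>
      hC (s, x) ⟨Metric.ball_subset_closedBall hs, Set.uIoc_subset_uIcc hx⟩)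
    intervalIntegrable_const
    (MeasureTheory.ae_of_all _ fun x _ s _ => hd s x)).2

lemma hasDerivAt_intervalIntegral_comp {g g' : ℝ → ℝ} (hg : ∀ y, HasDerivAt g (g' y) y)
    (hg' : Continuous g') {u ut : ℝ → ℝ → ℝ} (hu : Continuous (Function.uncurry u))
    (hut : Continuous (Function.uncurry ut)) (hd : ∀ s x, HasDerivAt (fun s => u s x) (ut s x) s)
    (a b t : ℝ) :
    HasDerivAt (fun s => ∫ x in a..b, g (u s x)) (∫ x in a..b, g' (u t x) * ut t x) t := by
  have hgc : Continuous g := continuous_iff_continuousAt.2 fun y => (hg y).continuousAt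
  exact hasDerivAt_intervalIntegral_of_continuous
    (fun s => hgc.comp (hu.uncurry_left s))
    (by fun_prop) (fun s x => (hg (u s x)).comp s (hd s x)) t

lemma integral_cos_mul_Dop_sub {v : ℝ → ℝ} (hv : Continuous v) (c : ℝ) :
    ∫ x in (0:ℝ)..(2 * π), Real.cos (v x) * (Dop (fun y => Real.sin (v y)) x - c)
      = Ctilde v - c * ∫ x in (0:ℝ)..(2 * π), Real.cos (v x) := by
  have hD := continuous_Dop (continuous_sin.comp hv)
  simp only [mul_sub]
  rw [integral_sub (Continuous.intervalIntegrable (by fun_prop) _ _)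
    (Continuous.intervalIntegrable (by fun_prop) _ _), integral_mul_const, Ctilde, mul_comm c]

lemma integral_sin_mul_Dop_sub {v : ℝ → ℝ} (hv : Continuous v) (c : ℝ) :
    ∫ x in (0:ℝ)..(2 * π), Real.sin (v x) * (Dop (fun y => Real.sin (v y)) x - c)
      = -(c * ∫ x in (0:ℝ)..(2 * π), Real.sin (v x)) := by
  have hsin : Continuous fun x => Real.sin (v x) := continuous_sin.comp hv
  have hD := continuous_Dop hsin
  simp only [mul_sub]
  rw [integral_sub (Continuous.intervalIntegrable (by fun_prop) _ _)
    (Continuous.intervalIntegrable (by fun_prop) _ _), integral_mul_Dop_eq_zero hsin,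
    integral_mul_const, zero_sub, mul_comm]

lemma sq_add_sq_eq_of_hasDerivAt_rotation {F G c : ℝ → ℝ}
    (hF : ∀ s, HasDerivAt F (-(c s * G s)) s) (hG : ∀ s, HasDerivAt G (c s * F s) s) (s t : ℝ) :
    F s ^ 2 + G s ^ 2 = F t ^ 2 + G t ^ 2 := by
  have h : ∀ r, HasDerivAt (fun r => F r ^ 2 + G r ^ 2) 0 r := fun r =>
    (((hF r).pow 2).add ((hG r).pow 2)).congr_deriv (by ring)
  exact is_const_of_deriv_eq_zero (fun r => (h r).differentiableAt) (fun r => (h r).deriv) s t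

theorem sineGordon_integral_solves_differential_form_general (H₀ : ℝ) (hH₀ : H₀ ≠ 0)
    (u ut : ℝ → ℝ → ℝ)
    (hu : Continuous (Function.uncurry u))
    (hut : Continuous (Function.uncurry ut))
    (hderiv : ∀ t x : ℝ, HasDerivAt (fun s => u s x) (ut t x) t)
    (heq : ∀ t x : ℝ, ut t x = Dop (fun y => Real.sin (u t y)) x - Ctilde (u t) / H₀)
    (hF0 : (∫ x in (0:ℝ)..(2 * π), Real.sin (u 0 x)) = 0)
    (hH0 : (∫ x in (0:ℝ)..(2 * π), Real.cos (u 0 x)) = H₀) :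
    ∀ t x : ℝ, HasDerivAt (fun y => ut t y) (Real.sin (u t x)) x := by
  have hus : ∀ s, Continuous (u s) := fun s => hu.uncurry_left s
  have hut_eq : ∀ s, ut s = fun x => Dop (fun y => Real.sin (u s y)) x - Ctilde (u s) / H₀ :=
    fun s => funext (heq s)
  set F := fun s => ∫ x in (0:ℝ)..(2 * π), Real.sin (u s x)
  set G := fun s => (∫ x in (0:ℝ)..(2 * π), Real.cos (u s x)) - H₀
  have hF : ∀ s, HasDerivAt F (-(Ctilde (u s) / H₀ * G s)) s := fun s => by
    convert hasDerivAt_intervalIntegral_comp hasDerivAt_sin continuous_cos hu hut hderiv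
      0 (2 * π) s using 1
    rw [hut_eq s, integral_cos_mul_Dop_sub (hus s)]
    field_simp
    ring
  have hG : ∀ s, HasDerivAt G (Ctilde (u s) / H₀ * F s) s := fun s => by
    have h := (hasDerivAt_intervalIntegral_comp hasDerivAt_cos (by fun_prop) hu hut hderiv
      0 (2 * π) s).sub_const H₀
    simpa only [neg_mul, integral_neg, hut_eq s, integral_sin_mul_Dop_sub (hus s), neg_neg] using h
  have hF_zero : ∀ s, F s = 0 := fun s => by
    have h := sq_add_sq_eq_of_hasDerivAt_rotation hF hG s 0
    simp only [F, G, hF0, hH0, sub_self] at h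
    nlinarith [sq_nonneg (F s), sq_nonneg (G s)]
  intro t x
  have hmean : fmean (fun y => Real.sin (u t y)) = 0 := by
    rw [fmean]; exact mul_eq_zero_of_right _ (hF_zero t)
  simpa [hut_eq t, hmean] using
    (hasDerivAt_Dop (continuous_sin.comp' (hus t)) x).sub_const (Ctilde (u t) / H₀)

/-- A solution of the integral form `∂ₜu = 𝒟(sin∘u(t,·)) − C̃(u(t,·))/H₀` of the
sine-Gordon equation with `ℱ(u(0,·)) = 0` and `ℋ(u(0,·)) = H₀ ≠ 0` is a classical
solution of the sine-Gordon equation `u_{tx} = sin u`: for every `t` and `x`, the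
function `y ↦ ∂ₜu(t,y)` is differentiable at `x` with derivative `sin(u(t,x))`. -/
theorem sineGordon_integral_solves_differential_form (H₀ : ℝ) (hH₀ : H₀ ≠ 0)
    (u ut : ℝ → ℝ → ℝ)
    (hu : Continuous (Function.uncurry u))
    (hper : ∀ t x : ℝ, u t (x + 2 * π) = u t x)
    (hut : Continuous (Function.uncurry ut))
    (hderiv : ∀ t x : ℝ, HasDerivAt (fun s => u s x) (ut t x) t)
    (heq : ∀ t x : ℝ, ut t x = Dop (fun y => Real.sin (u t y)) x - Ctilde (u t) / H₀)
    (hF0 : (∫ x in (0:ℝ)..(2 * π), Real.sin (u 0 x)) = 0)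
    (hH0 : (∫ x in (0:ℝ)..(2 * π), Real.cos (u 0 x)) = H₀) :
    ∀ t x : ℝ, HasDerivAt (fun y => ut t y) (Real.sin (u t x)) x :=
  sineGordon_integral_solves_differential_form_general H₀ hH₀ u ut hu hut hderiv heq hF0 hH0
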